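/- Let X be a finite-dimensional Banach space with numerical radius a norm on L(X), T ∈ L(X)_w and V a subspace of L(X)_w. Suppose there exists S ∈ V with w(T − S) = d_w(T, V) such that T − S is nu-smooth. Then d_w(T, V) = max{ x*(Tx) : x ∈ E_X, x* ∈ E_{X*}, |x*(x)| = 1, Im(x*(Tx)) = 0, and x*(Ax) = 0 for all A ∈ V }. -/

import Mathlib

variable {𝕜 : Type*} [RCLike 𝕜] {X : Type*} [NormedAddCommGroup X] [NormedSpace 𝕜 X]

/-- The numerical radius of a bounded linear operator on a Banach space. -/
noncomputable def nrad (T : X →L[𝕜] X) : ℝ :=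
  sSup {r : ℝ | ∃ (x : X) (f : X →L[𝕜] 𝕜), ‖x‖ = 1 ∧ ‖f‖ = 1 ∧ f x = 1 ∧ r = ‖f (T x)‖}

/-- The functional `x* ⊗ x : T ↦ x*(Tx)` on `L(X)`. -/
noncomputable def tensor (f : X →L[𝕜] 𝕜) (x : X) : (X →L[𝕜] X) →L[𝕜] 𝕜 :=
  f.comp (ContinuousLinearMap.apply 𝕜 X x)

/-- The dual norm induced on functionals by the numerical radius norm. -/
noncomputable def wdual (g : (X →L[𝕜] X) →L[𝕜] 𝕜) : ℝ :=
  sSup {r : ℝ | ∃ T : X →L[𝕜] X, nrad T ≤ 1 ∧ r = ‖g T‖}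

/-- The set `J_w(T)` of norm-one supporting functionals of `T` in `(L(X)_w)*`. -/
noncomputable def Jw (T : X →L[𝕜] X) : Set ((X →L[𝕜] X) →L[𝕜] 𝕜) :=
  {g | wdual g = 1 ∧ g T = (nrad T : 𝕜)}

/-- The numerical radius attainment set `M_{w(T)}`. -/
noncomputable def Mw (T : X →L[𝕜] X) : Set (X × (X →L[𝕜] 𝕜)) :=
  {p | ‖p.1‖ = 1 ∧ ‖p.2‖ = 1 ∧ p.2 p.1 = 1 ∧ ‖p.2 (T p.1)‖ = nrad T}

/-- The distance of `T` from `V` equals the maximum of `w(T − S)`-distance formula. -/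
noncomputable def dw {X : Type*} [NormedAddCommGroup X] [NormedSpace 𝕜 X]
    (T : X →L[𝕜] X) (V : Submodule 𝕜 (X →L[𝕜] X)) : ℝ :=
  sInf {r : ℝ | ∃ S ∈ V, r = nrad (T - S)}

/-!
A best approximation `T₀ = T - S` yields, by Hahn–Banach for the numerical-radius seminorm, a
supporting functional of `T₀` that annihilates `V`. By compactness `w(T₀)` is attained at a pair
`(x, x*)`, rotated so that `x*(T₀ x) = w(T₀)`; then `x* ⊗ x` also supports `T₀`, so smoothness
identifies it with that functional: `x*` annihilates `V` and `x*(T x) = d_w(T, V)`. If `x` (or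
`x*`) is split along an open segment, strict convexity of the scalar field forces both ends to be
attaining pairs as well, so by smoothness they have the same tensor as `(x, x*)`, and the tensor
is injective in each factor. Conversely `|x*(T x)| = |x*((T - A) x)| ≤ w(T - A)` for `A ∈ V`.
-/

open Metric

lemma map_mem_openSegment {E G F : Type*} [AddCommGroup E] [Module ℝ E] [AddCommGroup G]
    [Module ℝ G] [FunLike F E G] [LinearMapClass F ℝ E G] (φ : F) {x a b : E}
    (h : x ∈ openSegment ℝ a b) : φ x ∈ openSegment ℝ (φ a) (φ b) := by
  have := image_openSegment ℝ (LinearMapClass.linearMap φ).toAffineMap a b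
  exact this ▸ ⟨x, h, rfl⟩

lemma RCLike.eq_of_mem_openSegment_of_norm_le {u v w : 𝕜} {r : ℝ} (hu : ‖u‖ ≤ r)
    (hv : ‖v‖ ≤ r) (hw : ‖w‖ = r) (h : w ∈ openSegment ℝ u v) : u = w ∧ v = w := by
  rcases eq_or_ne r 0 with rfl | hr
  · simp_all [norm_le_zero_iff]
  have hext : w ∈ Set.extremePoints ℝ (closedBall (0 : 𝕜) r) :=
    StrictConvexSpace.sphere_subset_extremePoints_closedBall 0 hr (by simpa using hw)
  exact (mem_extremePoints.1 hext).2 u (mem_closedBall_zero_iff.2 hu) v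
    (mem_closedBall_zero_iff.2 hv) h

/-- The functional `v + c • x ↦ c * p x` on `V ⊔ 𝕜 ∙ x` is dominated by `p`; extend it by
Hahn–Banach. -/
lemma Seminorm.exists_dual_eq_of_forall_le_sub {E : Type*} [AddCommGroup E] [Module 𝕜 E]
    (p : Seminorm 𝕜 E) (V : Submodule 𝕜 E) {x : E} (hx : ∀ v ∈ V, p x ≤ p (x - v)) :
    ∃ g : Module.Dual 𝕜 E, (∀ v ∈ V, g v = 0) ∧ g x = p x ∧ ∀ y, ‖g y‖ ≤ p y := by
  by_cases hxV : x ∈ V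
  · have hpx : p x = 0 := le_antisymm (by simpa using hx x hxV) (apply_nonneg p x)
    exact ⟨0, fun _ _ ↦ rfl, by simp [hpx], fun y ↦ by simp⟩
  set f₀ : E →ₗ.[𝕜] 𝕜 := ⟨V, 0⟩
  set f := f₀.supSpanSingleton x (p x : 𝕜) hxV
  have hf : ∀ z, ‖f z‖ ≤ p z := by
    rintro ⟨_, hz⟩
    rw [LinearPMap.domain_supSpanSingleton] at hz
    obtain ⟨v, hv, _, hc, rfl⟩ := Submodule.mem_sup.1 hz
    obtain ⟨c, rfl⟩ := Submodule.mem_span_singleton.1 hc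
    have hfz := LinearPMap.supSpanSingleton_apply_mk f₀ x (p x : 𝕜) hxV v hv c
    rw [show f₀ ⟨v, hv⟩ = 0 from rfl, zero_add, RingHom.id_apply, smul_eq_mul] at hfz
    rw [hfz, norm_mul, RCLike.norm_ofReal, abs_of_nonneg (apply_nonneg p x)]
    rcases eq_or_ne c 0 with rfl | hc
    · simp
    calc ‖c‖ * p x ≤ ‖c‖ * p (x - (-c⁻¹) • v) := by gcongr; exact hx _ (V.smul_mem _ hv)
      _ = p (v + c • x) := by
        rw [← map_smul_eq_mul, smul_sub, smul_smul, mul_neg, mul_inv_cancel₀ hc, neg_smul,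
          one_smul, sub_neg_eq_add, add_comm]
  obtain ⟨g, hgf, hg⟩ := Module.Dual.exists_extension_of_le_seminorm f.domain f.toFun hf
  refine ⟨g, fun v hv ↦ ?_, ?_, hg⟩
  · exact (hgf ⟨v, Submodule.mem_sup_left hv⟩).trans
      (LinearPMap.supSpanSingleton_apply_mk_of_mem _ _ hxV hv)
  · exact (hgf ⟨x, Submodule.mem_sup_right (Submodule.mem_span_singleton_self x)⟩).trans
      (LinearPMap.supSpanSingleton_apply_self _ _ hxV)

lemma nrad_bddAbove (T : X →L[𝕜] X) :
    BddAbove {r : ℝ | ∃ (x : X) (f : X →L[𝕜] 𝕜), ‖x‖ = 1 ∧ ‖f‖ = 1 ∧ f x = 1 ∧ r = ‖f (T x)‖} := by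
  refine ⟨‖T‖, ?_⟩
  rintro r ⟨x, f, hx, hf, _, rfl⟩
  simpa [hx, hf] using f.le_opNorm_of_le (T.le_opNorm_of_le hx.le)

lemma norm_apply_le_nrad_of_apply_eq_one {T : X →L[𝕜] X} {x : X} {f : X →L[𝕜] 𝕜}
    (hx : ‖x‖ = 1) (hf : ‖f‖ = 1) (hfx : f x = 1) : ‖f (T x)‖ ≤ nrad T :=
  le_csSup (nrad_bddAbove T) ⟨x, f, hx, hf, hfx, rfl⟩

lemma norm_eq_one_of_norm_apply_eq_one {x : X} {f : X →L[𝕜] 𝕜} (hx : ‖x‖ ≤ 1) (hf : ‖f‖ ≤ 1)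
    (hfx : ‖f x‖ = 1) : ‖x‖ = 1 ∧ ‖f‖ = 1 := by
  have h := hfx ▸ f.le_opNorm x
  constructor <;> nlinarith [norm_nonneg x, norm_nonneg f]

/-- Rotating `f` by the unimodular scalar `conj (f x)` reduces to the defining pairs of `nrad`. -/
lemma norm_apply_le_nrad {T : X →L[𝕜] X} {x : X} {f : X →L[𝕜] 𝕜}
    (hx : ‖x‖ ≤ 1) (hf : ‖f‖ ≤ 1) (hfx : ‖f x‖ = 1) : ‖f (T x)‖ ≤ nrad T := by
  obtain ⟨hx, hf⟩ := norm_eq_one_of_norm_apply_eq_one hx hf hfx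
  have hrot : (starRingEnd 𝕜 (f x) • f) x = 1 := by
    rw [smul_apply, smul_eq_mul, RCLike.conj_mul, hfx]; simp
  have hnorm : ‖starRingEnd 𝕜 (f x) • f‖ = 1 := by rw [norm_smul, RCLike.norm_conj, hfx, hf, one_mul]
  simpa [hfx] using norm_apply_le_nrad_of_apply_eq_one (T := T) hx hnorm hrot

lemma exists_norm_eq_one_apply_eq_one [Nontrivial X] :
    ∃ (x : X) (f : X →L[𝕜] 𝕜), ‖x‖ = 1 ∧ ‖f‖ = 1 ∧ f x = 1 := by
  obtain ⟨y, hy⟩ := exists_ne (0 : X)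
  set x : X := (‖y‖⁻¹ : 𝕜) • y
  have hx : ‖x‖ = 1 := norm_smul_inv_norm hy
  obtain ⟨f, hf, hfx⟩ := exists_dual_vector 𝕜 x (by rw [hx]; exact one_ne_zero)
  exact ⟨x, f, hx, hf, by rw [hfx, hx, RCLike.ofReal_one]⟩

lemma nrad_nonneg [Nontrivial X] (T : X →L[𝕜] X) : 0 ≤ nrad T := by
  obtain ⟨x, f, hx, hf, hfx⟩ := exists_norm_eq_one_apply_eq_one (𝕜 := 𝕜) (X := X)
  exact (norm_nonneg _).trans (norm_apply_le_nrad_of_apply_eq_one hx hf hfx)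

lemma nrad_le_of_forall [Nontrivial X] {T : X →L[𝕜] X} {c : ℝ}
    (h : ∀ (x : X) (f : X →L[𝕜] 𝕜), ‖x‖ = 1 → ‖f‖ = 1 → f x = 1 → ‖f (T x)‖ ≤ c) :
    nrad T ≤ c := by
  obtain ⟨x, f, hx, hf, hfx⟩ := exists_norm_eq_one_apply_eq_one (𝕜 := 𝕜) (X := X)
  refine csSup_le ⟨_, x, f, hx, hf, hfx, rfl⟩ ?_
  rintro r ⟨x, f, hx, hf, hfx, rfl⟩
  exact h x f hx hf hfx

lemma nrad_le_opNorm [Nontrivial X] (T : X →L[𝕜] X) : nrad T ≤ ‖T‖ :=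
  nrad_le_of_forall fun x f hx hf _ ↦ by
    simpa [hx, hf] using f.le_opNorm_of_le (T.le_opNorm_of_le hx.le)

lemma nrad_add_le [Nontrivial X] (A B : X →L[𝕜] X) : nrad (A + B) ≤ nrad A + nrad B :=
  nrad_le_of_forall fun x f hx hf hfx ↦ by
    rw [add_apply, map_add]
    exact (norm_add_le _ _).trans (add_le_add (norm_apply_le_nrad_of_apply_eq_one hx hf hfx)
      (norm_apply_le_nrad_of_apply_eq_one hx hf hfx))

lemma nrad_smul_le [Nontrivial X] (c : 𝕜) (T : X →L[𝕜] X) : nrad (c • T) ≤ ‖c‖ * nrad T :=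
  nrad_le_of_forall fun x f hx hf hfx ↦ by
    rw [smul_apply, map_smul, norm_smul]
    exact mul_le_mul_of_nonneg_left (norm_apply_le_nrad_of_apply_eq_one hx hf hfx) (norm_nonneg c)

lemma nrad_smul [Nontrivial X] (c : 𝕜) (T : X →L[𝕜] X) : nrad (c • T) = ‖c‖ * nrad T := by
  refine le_antisymm (nrad_smul_le c T) ?_
  rcases eq_or_ne c 0 with rfl | hc
  · simpa using nrad_nonneg _
  calc ‖c‖ * nrad T = ‖c‖ * nrad (c⁻¹ • c • T) := by rw [inv_smul_smul₀ hc]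
    _ ≤ ‖c‖ * (‖c⁻¹‖ * nrad (c • T)) := by gcongr; exact nrad_smul_le _ _
    _ = nrad (c • T) := by rw [norm_inv, mul_inv_cancel_left₀ (norm_ne_zero_iff.2 hc)]

lemma nrad_eq_zero_of_subsingleton [Subsingleton X] (T : X →L[𝕜] X) : nrad T = 0 := by
  refine (congrArg sSup (Set.eq_empty_of_forall_notMem ?_)).trans Real.sSup_empty
  rintro r ⟨x, f, hx, -⟩
  simp [Subsingleton.elim x 0] at hx

lemma nontrivial_of_nrad_ne_zero {T : X →L[𝕜] X} (hT : nrad T ≠ 0) : Nontrivial X := by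
  by_contra h
  have := not_nontrivial_iff_subsingleton.1 h
  exact hT (nrad_eq_zero_of_subsingleton T)

noncomputable def nradSeminorm [Nontrivial X] : Seminorm 𝕜 (X →L[𝕜] X) :=
  Seminorm.of nrad nrad_add_le nrad_smul

lemma exists_nrad_supporting_annihilator [Nontrivial X] {T : X →L[𝕜] X}
    {V : Submodule 𝕜 (X →L[𝕜] X)} (hT : ∀ B ∈ V, nrad T ≤ nrad (T - B)) :
    ∃ G : (X →L[𝕜] X) →L[𝕜] 𝕜, (∀ A ∈ V, G A = 0) ∧ G T = nrad T ∧ ∀ A, ‖G A‖ ≤ nrad A := by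
  obtain ⟨G, hGV, hGT, hG⟩ := nradSeminorm.exists_dual_eq_of_forall_le_sub V hT
  exact ⟨G.mkContinuous 1 fun A ↦ by
    rw [one_mul]; exact (hG A).trans (nrad_le_opNorm A), hGV, hGT, hG⟩

lemma wdual_neg (g : (X →L[𝕜] X) →L[𝕜] 𝕜) : wdual (-g) = wdual g := by
  simp only [wdual, neg_apply, norm_neg]

lemma mem_Jw_of_forall_norm_apply_le_nrad [Nontrivial X] {T : X →L[𝕜] X}
    {G : (X →L[𝕜] X) →L[𝕜] 𝕜} (hT : 0 < nrad T) (hG : ∀ A, ‖G A‖ ≤ nrad A)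
    (hGT : G T = nrad T) : G ∈ Jw T := by
  refine ⟨IsGreatest.csSup_eq ⟨⟨((nrad T)⁻¹ : 𝕜) • T, ?_, ?_⟩, ?_⟩, hGT⟩
  · rw [nrad_smul, norm_inv, RCLike.norm_ofReal, abs_of_pos hT, inv_mul_cancel₀ hT.ne']
  · rw [map_smul, hGT, smul_eq_mul, ← RCLike.ofReal_inv, ← RCLike.ofReal_mul,
      inv_mul_cancel₀ hT.ne', RCLike.ofReal_one, norm_one]
  · rintro _ ⟨A, hA, rfl⟩
    exact (hG A).trans hA

/-- `Jw T` is symmetric when `nrad T = 0`, so a smooth operator has nonzero numerical radius. -/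
lemma nrad_ne_zero_of_Jw_eq_singleton {T : X →L[𝕜] X} {g : (X →L[𝕜] X) →L[𝕜] 𝕜}
    (hJ : Jw T = {g}) : nrad T ≠ 0 := by
  intro hT
  have hg : g ∈ Jw T := hJ ▸ rfl
  have hneg : -g ∈ Jw T := ⟨(wdual_neg g).trans hg.1, by simp [hg.2, hT]⟩
  rw [hJ, Set.mem_singleton_iff] at hneg
  have hg0 : ∀ A, g A = 0 := fun A ↦ CharZero.neg_eq_self_iff.1 (congrArg (· A) hneg)
  have : wdual g ≤ 0 := Real.sSup_nonpos (by rintro _ ⟨A, -, rfl⟩; simp [hg0])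
  linarith [hg.1]

lemma tensor_apply (f : X →L[𝕜] 𝕜) (x : X) (A : X →L[𝕜] X) : tensor f x A = f (A x) := rfl

lemma tensor_smulRight (f : X →L[𝕜] 𝕜) (x : X) (ψ : X →L[𝕜] 𝕜) (z : X) :
    tensor f x (ψ.smulRight z) = ψ x * f z := by
  simp [tensor_apply]

lemma tensor_right_injective {f : X →L[𝕜] 𝕜} (hf : f ≠ 0) : Function.Injective (tensor f) := by
  intro x y hxy
  by_contra hne
  obtain ⟨z, hz⟩ := DFunLike.ne_iff.1 hf
  obtain ⟨ψ, hψ⟩ := SeparatingDual.exists_ne_zero (R := 𝕜) (sub_ne_zero.2 hne)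
  have h := congrArg (· (ψ.smulRight z)) hxy
  simp only [tensor_smulRight] at h
  exact hψ (by rw [map_sub, mul_right_cancel₀ hz h, sub_self])

lemma tensor_left_injective {x : X} (hx : x ≠ 0) :
    Function.Injective fun f : X →L[𝕜] 𝕜 ↦ tensor f x := by
  intro f g hfg
  obtain ⟨ψ, hψ⟩ := SeparatingDual.exists_ne_zero (R := 𝕜) hx
  ext z
  have h := congrArg (· (ψ.smulRight z)) hfg
  simp only [tensor_smulRight] at h
  exact mul_left_cancel₀ hψ h

lemma exists_norm_apply_eq_nrad [FiniteDimensional 𝕜 X] [Nontrivial X] (T : X →L[𝕜] X) :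
    ∃ (x : X) (f : X →L[𝕜] 𝕜), ‖x‖ = 1 ∧ ‖f‖ = 1 ∧ f x = 1 ∧ ‖f (T x)‖ = nrad T := by
  have : ProperSpace X := FiniteDimensional.proper 𝕜 X
  have : ProperSpace (X →L[𝕜] 𝕜) := FiniteDimensional.proper 𝕜 _
  set K : Set (X × (X →L[𝕜] 𝕜)) := {p | ‖p.1‖ = 1 ∧ ‖p.2‖ = 1 ∧ p.2 p.1 = 1}
  have hK : IsCompact K := by
    refine (isCompact_closedBall (0 : X) 1).prod (isCompact_closedBall (0 : X →L[𝕜] 𝕜) 1)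
      |>.of_isClosed_subset ?_ fun p hp ↦ ⟨by simp [hp.1], by simp [hp.2.1]⟩
    exact (isClosed_eq (by fun_prop) continuous_const).inter
      ((isClosed_eq (by fun_prop) continuous_const).inter
        (isClosed_eq (by fun_prop) continuous_const))
  obtain ⟨x₀, f₀, hx₀, hf₀, hf₀x₀⟩ := exists_norm_eq_one_apply_eq_one (𝕜 := 𝕜) (X := X)
  obtain ⟨⟨x, f⟩, ⟨hx, hf, hfx⟩, hmax⟩ :=
    hK.exists_isMaxOn ⟨(x₀, f₀), hx₀, hf₀, hf₀x₀⟩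
      (Continuous.continuousOn (f := fun p : X × (X →L[𝕜] 𝕜) ↦ ‖p.2 (T p.1)‖) (by fun_prop))
  refine ⟨x, f, hx, hf, hfx, le_antisymm (norm_apply_le_nrad_of_apply_eq_one hx hf hfx) ?_⟩
  exact nrad_le_of_forall fun y φ hy hφ hφy ↦ hmax (a := (y, φ)) ⟨hy, hφ, hφy⟩

lemma exists_apply_eq_nrad [FiniteDimensional 𝕜 X] [Nontrivial X] (T : X →L[𝕜] X) :
    ∃ (x : X) (f : X →L[𝕜] 𝕜), ‖x‖ = 1 ∧ ‖f‖ = 1 ∧ ‖f x‖ = 1 ∧ f (T x) = nrad T := by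
  obtain ⟨x, f, hx, hf, hfx, hfT⟩ := exists_norm_apply_eq_nrad T
  obtain ⟨c, hc, hcf⟩ := RCLike.exists_norm_eq_mul_self (f (T x))
  refine ⟨x, c • f, hx, by rw [norm_smul, hc, hf, one_mul], ?_, ?_⟩
  · rw [smul_apply, hfx, smul_eq_mul, mul_one, hc]
  · rw [smul_apply, smul_eq_mul, ← hcf, hfT]

section Smooth

variable [Nontrivial X] {T : X →L[𝕜] X} {g : (X →L[𝕜] X) →L[𝕜] 𝕜}

lemma tensor_eq_of_Jw_eq_singleton (hJ : Jw T = {g}) (hT : 0 < nrad T) {x : X}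
    {f : X →L[𝕜] 𝕜} (hx : ‖x‖ ≤ 1) (hf : ‖f‖ ≤ 1) (hfx : ‖f x‖ = 1) (hfT : f (T x) = nrad T) :
    tensor f x = g := by
  have hmem := mem_Jw_of_forall_norm_apply_le_nrad (G := tensor f x) hT
    (fun A ↦ norm_apply_le_nrad hx hf hfx) hfT
  rwa [hJ] at hmem

lemma mem_extremePoints_dual_closedBall_of_apply_eq_nrad (hJ : Jw T = {g}) (hT : 0 < nrad T)
    {x : X} {f : X →L[𝕜] 𝕜} (hx : ‖x‖ ≤ 1) (hf : ‖f‖ ≤ 1) (hfx : ‖f x‖ = 1)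
    (hfT : f (T x) = nrad T) : f ∈ Set.extremePoints ℝ (closedBall (0 : X →L[𝕜] 𝕜) 1) := by
  refine ⟨mem_closedBall_zero_iff.2 hf, fun f₁ hf₁ f₂ hf₂ hseg ↦ ?_⟩
  rw [mem_closedBall_zero_iff] at hf₁ hf₂
  have hbound : ∀ φ : X →L[𝕜] 𝕜, ‖φ‖ ≤ 1 → ‖φ x‖ ≤ 1 := fun φ hφ ↦
    (φ.le_opNorm x).trans (mul_le_one₀ hφ (norm_nonneg x) hx)
  obtain ⟨h₁, h₂⟩ := RCLike.eq_of_mem_openSegment_of_norm_le (hbound f₁ hf₁) (hbound f₂ hf₂) hfx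
    (map_mem_openSegment ((ContinuousLinearMap.apply 𝕜 𝕜 x).restrictScalars ℝ) hseg)
  obtain ⟨hT₁, -⟩ := RCLike.eq_of_mem_openSegment_of_norm_le (w := f (T x))
    (norm_apply_le_nrad hx hf₁ (h₁ ▸ hfx)) (norm_apply_le_nrad hx hf₂ (h₂ ▸ hfx))
    (by rw [hfT, RCLike.norm_ofReal, abs_of_pos hT])
    (map_mem_openSegment ((ContinuousLinearMap.apply 𝕜 𝕜 (T x)).restrictScalars ℝ) hseg)
  apply tensor_left_injective (x := x) (by rintro rfl; simp at hfx)
  show tensor f₁ x = tensor f x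
  rw [tensor_eq_of_Jw_eq_singleton hJ hT hx hf₁ (h₁ ▸ hfx) (hT₁.trans hfT),
    tensor_eq_of_Jw_eq_singleton hJ hT hx hf hfx hfT]

variable [NormedSpace ℝ X] [IsScalarTower ℝ 𝕜 X]

lemma mem_extremePoints_closedBall_of_apply_eq_nrad (hJ : Jw T = {g}) (hT : 0 < nrad T)
    {x : X} {f : X →L[𝕜] 𝕜} (hx : ‖x‖ ≤ 1) (hf : ‖f‖ ≤ 1) (hfx : ‖f x‖ = 1)
    (hfT : f (T x) = nrad T) : x ∈ Set.extremePoints ℝ (closedBall (0 : X) 1) := by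
  refine ⟨mem_closedBall_zero_iff.2 hx, fun x₁ hx₁ x₂ hx₂ hseg ↦ ?_⟩
  rw [mem_closedBall_zero_iff] at hx₁ hx₂
  have hbound : ∀ y : X, ‖y‖ ≤ 1 → ‖f y‖ ≤ 1 := fun y hy ↦
    (f.le_opNorm y).trans (mul_le_one₀ hf (norm_nonneg y) hy)
  obtain ⟨h₁, h₂⟩ := RCLike.eq_of_mem_openSegment_of_norm_le (hbound x₁ hx₁) (hbound x₂ hx₂) hfx
    (map_mem_openSegment (f.restrictScalars ℝ) hseg)
  obtain ⟨hT₁, -⟩ := RCLike.eq_of_mem_openSegment_of_norm_le (w := f (T x))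
    (norm_apply_le_nrad hx₁ hf (h₁ ▸ hfx)) (norm_apply_le_nrad hx₂ hf (h₂ ▸ hfx))
    (by rw [hfT, RCLike.norm_ofReal, abs_of_pos hT])
    (map_mem_openSegment ((f.comp T).restrictScalars ℝ) hseg)
  apply tensor_right_injective (f := f) (by rintro rfl; simp at hfx)
  rw [tensor_eq_of_Jw_eq_singleton hJ hT hx₁ hf (h₁ ▸ hfx) (hT₁.trans hfT),
    tensor_eq_of_Jw_eq_singleton hJ hT hx hf hfx hfT]

end Smooth

lemma dw_le_nrad_sub [Nontrivial X] {T S : X →L[𝕜] X} {V : Submodule 𝕜 (X →L[𝕜] X)}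
    (hS : S ∈ V) : dw T V ≤ nrad (T - S) :=
  csInf_le ⟨0, by rintro _ ⟨S, -, rfl⟩; exact nrad_nonneg _⟩ ⟨S, hS, rfl⟩

lemma nrad_le_nrad_sub_of_eq_dw [Nontrivial X] {T S : X →L[𝕜] X}
    {V : Submodule 𝕜 (X →L[𝕜] X)} (hS : S ∈ V) (hSd : nrad (T - S) = dw T V) (B : X →L[𝕜] X)
    (hB : B ∈ V) : nrad (T - S) ≤ nrad (T - S - B) := by
  rw [hSd, sub_sub]
  exact dw_le_nrad_sub (V.add_mem hS hB)

lemma re_apply_le_dw {T : X →L[𝕜] X} {V : Submodule 𝕜 (X →L[𝕜] X)} {x : X}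
    {f : X →L[𝕜] 𝕜} (hx : ‖x‖ ≤ 1) (hf : ‖f‖ ≤ 1) (hfx : ‖f x‖ = 1)
    (hV : ∀ A ∈ V, f (A x) = 0) : RCLike.re (f (T x)) ≤ dw T V := by
  refine le_csInf ⟨_, 0, V.zero_mem, rfl⟩ ?_
  rintro _ ⟨S, hS, rfl⟩
  calc RCLike.re (f (T x)) ≤ ‖f (T x)‖ := RCLike.re_le_norm _
    _ = ‖f ((T - S) x)‖ := by rw [sub_apply, map_sub, hV S hS, sub_zero]
    _ ≤ nrad (T - S) := norm_apply_le_nrad hx hf hfx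

theorem stmt_16_general {X : Type*} [NormedAddCommGroup X] [NormedSpace 𝕜 X]
    [NormedSpace ℝ X] [IsScalarTower ℝ 𝕜 X] [FiniteDimensional 𝕜 X]
    (T : X →L[𝕜] X) (V : Submodule 𝕜 (X →L[𝕜] X))
    (hbest : ∃ S ∈ V, nrad (T - S) = dw T V ∧ ∃ g, Jw (T - S) = {g}) :
    IsGreatest {r : ℝ | ∃ (x : X) (f : X →L[𝕜] 𝕜),
        x ∈ Set.extremePoints ℝ (Metric.closedBall (0 : X) 1) ∧
        f ∈ Set.extremePoints ℝ (Metric.closedBall (0 : X →L[𝕜] 𝕜) 1) ∧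
        ‖f x‖ = 1 ∧ RCLike.im (f (T x)) = 0 ∧
        (∀ A ∈ V, f (A x) = 0) ∧ r = RCLike.re (f (T x))}
      (dw T V) := by
  obtain ⟨S, hSV, hSd, g, hJ⟩ := hbest
  have hd0 := nrad_ne_zero_of_Jw_eq_singleton hJ
  have := nontrivial_of_nrad_ne_zero hd0
  have hd : 0 < nrad (T - S) := (nrad_nonneg _).lt_of_ne' hd0
  obtain ⟨G, hGV, hGT, hG⟩ :=
    exists_nrad_supporting_annihilator (nrad_le_nrad_sub_of_eq_dw hSV hSd)
  have hGg : G = g := by simpa [hJ] using mem_Jw_of_forall_norm_apply_le_nrad hd hG hGT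
  obtain ⟨x, f, hx, hf, hfx, hfT⟩ := exists_apply_eq_nrad (T - S)
  have hfV : ∀ A ∈ V, f (A x) = 0 := fun A hA ↦ by
    rw [← tensor_apply, tensor_eq_of_Jw_eq_singleton hJ hd hx.le hf.le hfx hfT, ← hGg, hGV A hA]
  have hfTx : f (T x) = dw T V := by
    rw [← hSd, ← hfT, sub_apply, map_sub, hfV S hSV, sub_zero]
  refine ⟨⟨x, f, mem_extremePoints_closedBall_of_apply_eq_nrad hJ hd hx.le hf.le hfx hfT,
    mem_extremePoints_dual_closedBall_of_apply_eq_nrad hJ hd hx.le hf.le hfx hfT, hfx,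
    by simp [hfTx], hfV, by simp [hfTx]⟩, ?_⟩
  rintro _ ⟨y, φ, hy, hφ, hφy, -, hφV, rfl⟩
  exact re_apply_le_dw (mem_closedBall_zero_iff.1 hy.1) (mem_closedBall_zero_iff.1 hφ.1) hφy hφV

/-- If some best approximation `S ∈ V` to `T` is such that `T − S` is nu-smooth, then
`d_w(T,V)` is the maximum of `x*(Tx)` over extreme points annihilating `V` with
`Im x*(Tx) = 0`. -/
theorem stmt_16 {X : Type*} [NormedAddCommGroup X] [NormedSpace 𝕜 X]
    [NormedSpace ℝ X] [IsScalarTower ℝ 𝕜 X] [FiniteDimensional 𝕜 X]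
    (hw : ∀ T : X →L[𝕜] X, nrad T = 0 → T = 0)
    (T : X →L[𝕜] X) (V : Submodule 𝕜 (X →L[𝕜] X))
    (hbest : ∃ S ∈ V, nrad (T - S) = dw T V ∧ ∃ g, Jw (T - S) = {g}) :
    IsGreatest {r : ℝ | ∃ (x : X) (f : X →L[𝕜] 𝕜),
        x ∈ Set.extremePoints ℝ (Metric.closedBall (0 : X) 1) ∧
        f ∈ Set.extremePoints ℝ (Metric.closedBall (0 : X →L[𝕜] 𝕜) 1) ∧
        ‖f x‖ = 1 ∧ RCLike.im (f (T x)) = 0 ∧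
        (∀ A ∈ V, f (A x) = 0) ∧ r = RCLike.re (f (T x))}
      (dw T V) :=
  stmt_16_general T V hbest
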